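/- Every zero-median solution (x_1, …, x_N) of the MIW recursion satisfies the variance bound: x_1² + x_2² + ⋯ + x_N² = N − 1. -/
import Mathlib


noncomputable section

/-- Partial sums `S_n = x_1 + ⋯ + x_n`. -/
def Ssum (x : ℕ → ℝ) (n : ℕ) : ℝ := ∑ i ∈ Finset.Icc 1 n, x i

/-- `x` is a solution of the MIW recursion
`x_{n+1} = x_n - 1/(x_1 + ⋯ + x_n)` for `1 ≤ n ≤ N - 1`. -/
def IsMIW (N : ℕ) (x : ℕ → ℝ) : Prop :=
  ∀ n, 1 ≤ n → n ≤ N - 1 → Ssum x n ≠ 0 ∧ x (n + 1) = x n - 1 / Ssum x n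

/-- Zero-median: `x_m = 0` if `N` is odd and `x_m = -x_{m+1}` if `N` is even,
where `m = (N+1)/2` if `N` is odd and `m = N/2` if `N` is even. -/
def ZeroMedian (N : ℕ) (x : ℕ → ℝ) : Prop :=
  if N % 2 = 1 then x ((N + 1) / 2) = 0 else x (N / 2) = -x (N / 2 + 1)

lemma Ssum_succ (x : ℕ → ℝ) (n : ℕ) : Ssum x (n + 1) = Ssum x n + x (n + 1) := by
  unfold Ssum
  rw [Finset.sum_Icc_succ_top (by omega : 1 ≤ n + 1)]

lemma Ssum_zero (x : ℕ → ℝ) : Ssum x 0 = 0 := by simp [Ssum]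

lemma sum_sq (N : ℕ) (x : ℕ → ℝ) (hMIW : IsMIW N x) :
    ∀ n, 1 ≤ n → n ≤ N →
      ∑ i ∈ Finset.Icc 1 n, (x i) ^ 2 = (n : ℝ) - 1 + Ssum x n * x n := by
  intro n hn
  induction n, hn using Nat.le_induction with
  | base =>
    intro _
    simp [Ssum]
    ring
  | succ n hn ih =>
    intro hnN
    obtain ⟨hS, hx⟩ := hMIW n hn (by omega)
    rw [Finset.sum_Icc_succ_top (by omega : 1 ≤ n + 1), ih (by omega), Ssum_succ, hx]
    push_cast
    field_simp
    ring

lemma SN_zero (N : ℕ) (hN : 2 ≤ N) (x : ℕ → ℝ) (hMIW : IsMIW N x)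
    (hmed : ZeroMedian N x) : Ssum x N = 0 := by
  unfold ZeroMedian at hmed
  rcases Nat.even_or_odd N with hE | hO
  · -- even case : N = m + m
    obtain ⟨m, hm⟩ := hE
    have hm1 : 1 ≤ m := by omega
    rw [if_neg (by omega)] at hmed
    have hdiv : N / 2 = m := by omega
    rw [hdiv] at hmed
    have key : ∀ k a, k + a + 1 = m →
        Ssum x (m + 1 + k) = Ssum x a ∧ x (m + 1 + k) = -x (a + 1) := by
      intro k
      induction k with
      | zero =>
        intro a ha
        obtain rfl : m = a + 1 := by omega
        have hx2 : x (a + 1 + 1 + 0) = -x (a + 1) := by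
          have h : x (a + 1 + 1 + 0) = x (a + 1 + 1) := rfl
          rw [h]; linarith [hmed]
        refine ⟨?_, hx2⟩
        have h1 : Ssum x (a + 1 + 1 + 0) = Ssum x (a + 1) + x (a + 1 + 1) :=
          Ssum_succ x (a + 1)
        rw [h1, Ssum_succ]
        linarith [hmed]
      | succ k ih =>
        intro a ha
        obtain ⟨hS1, hx1⟩ := ih (a + 1) (by omega)
        obtain ⟨hSr, hxr⟩ := hMIW (m + 1 + k) (by omega) (by omega)
        obtain ⟨hSa, hxa⟩ := hMIW (a + 1) (by omega) (by omega)
        have hidx : m + 1 + (k + 1) = (m + 1 + k) + 1 := by ring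
        have hxnew : x (m + 1 + (k + 1)) = -x (a + 1) := by
          rw [hidx, hxr, hx1, hS1]
          have : x (a + 1 + 1) = x (a + 1) - 1 / Ssum x (a + 1) := hxa
          rw [this]
          ring
        refine ⟨?_, hxnew⟩
        rw [hidx, Ssum_succ, ← hidx, hxnew, hS1, Ssum_succ]
        ring
    obtain ⟨h1, _⟩ := key (m - 1) 0 (by omega)
    have hidx : m + 1 + (m - 1) = N := by omega
    rw [hidx, Ssum_zero] at h1
    exact h1
  · -- odd case : N = 2 * p + 1
    obtain ⟨p, hp⟩ := hO
    have hp1 : 1 ≤ p := by omega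
    rw [if_pos (by omega)] at hmed
    have hdiv : (N + 1) / 2 = p + 1 := by omega
    rw [hdiv] at hmed
    have key : ∀ k a, k + a = p →
        Ssum x (p + 1 + k) = Ssum x a ∧ x (p + 1 + k) = -x (a + 1) := by
      intro k
      induction k with
      | zero =>
        intro a ha
        obtain rfl : a = p := by omega
        refine ⟨?_, ?_⟩
        · have h1 : Ssum x (a + 1 + 0) = Ssum x a + x (a + 1) := Ssum_succ x a
          rw [h1, hmed]; ring
        · have h : x (a + 1 + 0) = x (a + 1) := rfl
          rw [h, hmed]; norm_num
      | succ k ih =>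
        intro a ha
        obtain ⟨hS1, hx1⟩ := ih (a + 1) (by omega)
        obtain ⟨hSr, hxr⟩ := hMIW (p + 1 + k) (by omega) (by omega)
        obtain ⟨hSa, hxa⟩ := hMIW (a + 1) (by omega) (by omega)
        have hidx : p + 1 + (k + 1) = (p + 1 + k) + 1 := by ring
        have hxnew : x (p + 1 + (k + 1)) = -x (a + 1) := by
          rw [hidx, hxr, hx1, hS1]
          have : x (a + 1 + 1) = x (a + 1) - 1 / Ssum x (a + 1) := hxa
          rw [this]
          ring
        refine ⟨?_, hxnew⟩
        rw [hidx, Ssum_succ, ← hidx, hxnew, hS1, Ssum_succ]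
        ring
    obtain ⟨h1, _⟩ := key p 0 (by omega)
    have hidx : p + 1 + p = N := by omega
    rw [hidx, Ssum_zero] at h1
    exact h1

/-- Every zero-median solution of the MIW recursion satisfies the variance bound
`x_1² + ⋯ + x_N² = N - 1`. -/
theorem zeroMedian_variance_bound (N : ℕ) (hN : 2 ≤ N) (x : ℕ → ℝ)
    (hMIW : IsMIW N x) (hmed : ZeroMedian N x) :
    ∑ i ∈ Finset.Icc 1 N, (x i) ^ 2 = (N : ℝ) - 1 := by
  rw [sum_sq N x hMIW N (by omega) le_rfl, SN_zero N hN x hMIW hmed]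
  ring
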